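/- arXiv:2302.12946 — 7 statements merged into one kernel-verified Lean document; each statement's English description precedes it below -/
import Mathlib

section
/- Consider the toggle-switch switching system with parameters satisfying 0 < l₁ < θ₁ < h₁ and 0 < l₂ < h₂ < θ₂. Let x₁, x₂ : [0, ∞) → ℝ be differentiable functions satisfying x₁'(t) = −x₁(t) + σ₁(x₂(t)) and x₂'(t) = −x₂(t) + σ₂(x₁(t)) for all t ≥ 0, with x₁(0) > θ₁ and x₂(0) < θ₂. Then for all t ≥ 0 one has x₁(t) > θ₁ and x₂(t) < θ₂ (the domain (10) is forward invariant), and in fact x₁(t) = h₁ + (x₁(0) − h₁)e^{−t} and x₂(t) = l₂ + (x₂(0) − l₂)e^{−t}; consequently (x₁(t), x₂(t)) → (h₁, l₂) as t → ∞. -/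
open Filter Set

lemma exp_sol (c : ℝ) (f : ℝ → ℝ) (b : ℝ) (hb : 0 ≤ b)
    (hf : ∀ s ∈ Set.Ico (0:ℝ) b, HasDerivAt f (-f s + c) s)
    (hcont : ContinuousOn f (Set.Icc 0 b)) :
    f b = c + (f 0 - c) * Real.exp (-b) := by
  set g : ℝ → ℝ := fun t => (f t - c) * Real.exp t with hg
  have hgd : ∀ s ∈ Set.Ico (0:ℝ) b, HasDerivWithinAt g 0 (Set.Ici s) s := by
    intro s hs
    have h1 : HasDerivAt g ((-f s + c) * Real.exp s + (f s - c) * Real.exp s) s :=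
      ((hf s hs).sub_const c).mul (Real.hasDerivAt_exp s)
    have : (-f s + c) * Real.exp s + (f s - c) * Real.exp s = 0 := by ring
    rw [this] at h1
    exact h1.hasDerivWithinAt
  have hgc : ContinuousOn g (Set.Icc 0 b) :=
    (hcont.sub continuousOn_const).mul Real.continuous_exp.continuousOn
  have := constant_of_has_deriv_right_zero hgc hgd b (Set.right_mem_Icc.2 hb)
  simp only [hg] at this
  have he : Real.exp b ≠ 0 := Real.exp_ne_zero b
  have : f b - c = (f 0 - c) * Real.exp (-b) := by
    rw [Real.exp_neg]
    field_simp at this ⊢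
    simpa [Real.exp_zero] using this
  linarith [this]

/-- Toggle-switch switching system with `0 < l₁ < θ₁ < h₁` and `0 < l₂ < h₂ < θ₂`:
any solution starting in the domain `(10)` (i.e. `x₁(0) > θ₁`, `x₂(0) < θ₂`) stays in
that domain for all `t ≥ 0`, is given explicitly by exponential relaxation to `(h₁, l₂)`,
and converges to `(h₁, l₂)` as `t → ∞`. -/
theorem stmt_1 (l₁ h₁ θ₁ l₂ h₂ θ₂ : ℝ)
    (hpos₁ : 0 < l₁) (hlθ₁ : l₁ < θ₁) (hθh₁ : θ₁ < h₁)
    (hpos₂ : 0 < l₂) (hlh₂ : l₂ < h₂) (hhθ₂ : h₂ < θ₂)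
    (x₁ x₂ : ℝ → ℝ)
    (hode₁ : ∀ t, 0 ≤ t → HasDerivAt x₁ (-x₁ t + (if x₂ t < θ₂ then h₁ else l₁)) t)
    (hode₂ : ∀ t, 0 ≤ t → HasDerivAt x₂ (-x₂ t + (if x₁ t < θ₁ then h₂ else l₂)) t)
    (hinit₁ : θ₁ < x₁ 0) (hinit₂ : x₂ 0 < θ₂) :
    (∀ t, 0 ≤ t →
      θ₁ < x₁ t ∧ x₂ t < θ₂ ∧
      x₁ t = h₁ + (x₁ 0 - h₁) * Real.exp (-t) ∧
      x₂ t = l₂ + (x₂ 0 - l₂) * Real.exp (-t)) ∧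
    Tendsto (fun t => (x₁ t, x₂ t)) atTop (nhds (h₁, l₂)) := by
  have hc1 : ∀ b : ℝ, 0 ≤ b → ContinuousOn x₁ (Set.Icc 0 b) := fun b _ s hs =>
    ((hode₁ s hs.1).continuousAt).continuousWithinAt
  have hc2 : ∀ b : ℝ, 0 ≤ b → ContinuousOn x₂ (Set.Icc 0 b) := fun b _ s hs =>
    ((hode₂ s hs.1).continuousAt).continuousWithinAt
  -- formulas on an interval where goodness holds before the endpoint
  have formula : ∀ b : ℝ, 0 ≤ b →
      (∀ s ∈ Set.Ico (0:ℝ) b, θ₁ < x₁ s ∧ x₂ s < θ₂) →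
      x₁ b = h₁ + (x₁ 0 - h₁) * Real.exp (-b) ∧
      x₂ b = l₂ + (x₂ 0 - l₂) * Real.exp (-b) := by
    intro b hb hgood
    constructor
    · refine exp_sol h₁ x₁ b hb (fun s hs => ?_) (hc1 b hb)
      have := hode₁ s hs.1
      rwa [if_pos (hgood s hs).2] at this
    · refine exp_sol l₂ x₂ b hb (fun s hs => ?_) (hc2 b hb)
      have := hode₂ s hs.1
      rwa [if_neg (not_lt.2 (le_of_lt (hgood s hs).1))] at this
  -- values given by the formulas stay in the region
  have stay : ∀ b : ℝ, 0 ≤ b →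
      x₁ b = h₁ + (x₁ 0 - h₁) * Real.exp (-b) →
      x₂ b = l₂ + (x₂ 0 - l₂) * Real.exp (-b) →
      θ₁ < x₁ b ∧ x₂ b < θ₂ := by
    intro b hb e1 e2
    have he0 : 0 < Real.exp (-b) := Real.exp_pos _
    have he1 : Real.exp (-b) ≤ 1 := Real.exp_le_one_iff.2 (by linarith)
    constructor
    · rw [e1]; nlinarith
    · rw [e2]; nlinarith
  -- forward invariance
  have inv : ∀ t : ℝ, 0 ≤ t → θ₁ < x₁ t ∧ x₂ t < θ₂ := by
    by_contra hcon
    push_neg at hcon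
    obtain ⟨t₀, ht₀, hbad₀⟩ := hcon
    set B : Set ℝ := {t | 0 ≤ t ∧ ¬(θ₁ < x₁ t ∧ x₂ t < θ₂)} with hB
    have hBne : B.Nonempty := ⟨t₀, ht₀, fun h => absurd h.2 (not_lt.2 (hbad₀ h.1))⟩
    have hBbd : BddBelow B := ⟨0, fun u hu => hu.1⟩
    set T := sInf B with hT
    have hT0 : 0 ≤ T := le_csInf hBne fun u hu => hu.1
    have hgoodlt : ∀ s ∈ Set.Ico (0:ℝ) T, θ₁ < x₁ s ∧ x₂ s < θ₂ := by
      intro s hs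
      by_contra hsb
      exact absurd (csInf_le hBbd ⟨hs.1, hsb⟩) (not_le.2 hs.2)
    obtain ⟨e1, e2⟩ := formula T hT0 hgoodlt
    have hgoodT : θ₁ < x₁ T ∧ x₂ T < θ₂ := stay T hT0 e1 e2
    -- goodness on a neighborhood of T
    have hev : ∀ᶠ u in nhds T, θ₁ < x₁ u ∧ x₂ u < θ₂ := by
      have a1 : ∀ᶠ u in nhds T, θ₁ < x₁ u :=
        (hode₁ T hT0).continuousAt.eventually (eventually_gt_nhds hgoodT.1)
      have a2 : ∀ᶠ u in nhds T, x₂ u < θ₂ :=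
        (hode₂ T hT0).continuousAt.eventually (eventually_lt_nhds hgoodT.2)
      exact a1.and a2
    obtain ⟨ε, hε, hball⟩ := Metric.eventually_nhds_iff.1 hev
    have hlb : T + ε ≤ T := by
      refine le_csInf hBne fun u hu => ?_
      by_contra huc
      push_neg at huc
      have huT : T ≤ u := csInf_le hBbd hu
      have : dist u T < ε := by rw [Real.dist_eq, abs_of_nonneg (by linarith)]; linarith
      exact hu.2 (hball this)
    linarith
  have full : ∀ t, 0 ≤ t →
      θ₁ < x₁ t ∧ x₂ t < θ₂ ∧
      x₁ t = h₁ + (x₁ 0 - h₁) * Real.exp (-t) ∧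
      x₂ t = l₂ + (x₂ 0 - l₂) * Real.exp (-t) := by
    intro t ht
    obtain ⟨e1, e2⟩ := formula t ht fun s hs => inv s hs.1
    exact ⟨(inv t ht).1, (inv t ht).2, e1, e2⟩
  refine ⟨full, ?_⟩
  have hexp : Tendsto (fun t : ℝ => Real.exp (-t)) atTop (nhds 0) :=
    Real.tendsto_exp_neg_atTop_nhds_zero
  have t1 : Tendsto x₁ atTop (nhds h₁) := by
    have : Tendsto (fun t : ℝ => h₁ + (x₁ 0 - h₁) * Real.exp (-t)) atTop (nhds (h₁ + (x₁ 0 - h₁) * 0)) :=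
      tendsto_const_nhds.add (tendsto_const_nhds.mul hexp)
    rw [mul_zero, add_zero] at this
    exact this.congr' ((eventually_ge_atTop 0).mono fun t ht => ((full t ht).2.2.1).symm)
  have t2 : Tendsto x₂ atTop (nhds l₂) := by
    have : Tendsto (fun t : ℝ => l₂ + (x₂ 0 - l₂) * Real.exp (-t)) atTop (nhds (l₂ + (x₂ 0 - l₂) * 0)) :=
      tendsto_const_nhds.add (tendsto_const_nhds.mul hexp)
    rw [mul_zero, add_zero] at this
    exact this.congr' ((eventually_ge_atTop 0).mono fun t ht => ((full t ht).2.2.2).symm)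
  exact t1.prodMk_nhds t2
end

section
/- Consider the toggle-switch switching system with parameters satisfying 0 < l₁ < h₁, l₁ < θ₁, and θ₂ < l₂ < h₂ (so the production rate of x₂ always exceeds the threshold θ₂ at which x₂ acts on x₁). Then (l₁, h₂) is the unique equilibrium, and every pair of differentiable functions x₁, x₂ : [0, ∞) → ℝ satisfying the system for all t ≥ 0 converges to (l₁, h₂) as t → ∞; in particular there exists T ≥ 0 with x₂(t) > θ₂ for all t ≥ T, so the repressor x₂ is eventually permanently above its threshold. -/
open Filter Real Set Topology

/-! Since `σ₂ ≥ l₂ > θ₂`, the coordinate `x₂` relaxes towards a value above `θ₂` and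
eventually stays above it. From then on `x₁' = l₁ - x₁`, so `x₁ → l₁ < θ₁`; once `x₁ < θ₁`
for good, `x₂' = h₂ - x₂` and `x₂ → h₂`. The comparison behind each step is that
`t ↦ eᵗ (f t - c)` is monotone whenever `f' ≥ c - f`. -/

lemma add_mul_exp_sub_le_of_hasDerivAt {f f' : ℝ → ℝ} {a c : ℝ}
    (hf : ∀ t, a ≤ t → HasDerivAt f (f' t) t) (hf' : ∀ t, a ≤ t → c - f t ≤ f' t)
    {t : ℝ} (ht : a ≤ t) :
    c + (f a - c) * exp (a - t) ≤ f t := by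
  set g : ℝ → ℝ := fun s => exp s * (f s - c)
  have hg : ∀ s, a ≤ s → HasDerivAt g (exp s * (f' s - (c - f s))) s := fun s hs =>
    ((hasDerivAt_exp s).mul ((hf s hs).sub_const c)).congr_deriv (by ring)
  have hmono : MonotoneOn g (Ici a) := by
    refine monotoneOn_of_hasDerivWithinAt_nonneg (convex_Ici a)
      (fun s hs => (hg s hs).continuousAt.continuousWithinAt)
      (fun s hs => (hg s (interior_subset hs)).hasDerivWithinAt) fun s hs => ?_
    have := hf' s (interior_subset hs)
    have : 0 ≤ f' s - (c - f s) := by linarith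
    positivity
  have hgat : exp a * (f a - c) ≤ exp t * (f t - c) := hmono self_mem_Ici ht ht
  have key : (f a - c) * exp (a - t) ≤ f t - c := by
    rw [exp_sub, mul_div_assoc', div_le_iff₀ (exp_pos t)]
    linarith
  linarith

lemma tendsto_add_mul_exp_sub (a c d : ℝ) :
    Tendsto (fun t => c + d * exp (a - t)) atTop (𝓝 c) := by
  have hexp : Tendsto (fun t => exp (a - t)) atTop (𝓝 0) :=
    tendsto_exp_atBot.comp (tendsto_atBot_add_const_left _ a tendsto_neg_atTop_atBot)
  simpa using tendsto_const_nhds.add (hexp.const_mul d)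

lemma eventually_lt_of_hasDerivAt_ge_sub {f f' : ℝ → ℝ} {c θ : ℝ}
    (hf : ∀ᶠ t in atTop, HasDerivAt f (f' t) t ∧ c - f t ≤ f' t) (hθ : θ < c) :
    ∀ᶠ t in atTop, θ < f t := by
  obtain ⟨a, ha⟩ := eventually_atTop.1 hf
  filter_upwards [(tendsto_add_mul_exp_sub a c (f a - c)).eventually (eventually_gt_nhds hθ),
    eventually_ge_atTop a] with t hθt hat
  exact hθt.trans_le <|
    add_mul_exp_sub_le_of_hasDerivAt (fun s hs => (ha s hs).1) (fun s hs => (ha s hs).2) hat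

lemma tendsto_of_hasDerivAt_sub {f : ℝ → ℝ} {c : ℝ}
    (hf : ∀ᶠ t in atTop, HasDerivAt f (c - f t) t) :
    Tendsto f atTop (𝓝 c) := by
  obtain ⟨a, ha⟩ := eventually_atTop.1 hf
  refine (tendsto_add_mul_exp_sub a c (f a - c)).congr' ?_
  filter_upwards [eventually_ge_atTop a] with t hat
  -- the comparison applied to `f` and to `-f` gives both inequalities
  have hneg := add_mul_exp_sub_le_of_hasDerivAt (f := fun s => -f s)
    (f' := fun s => -(c - f s)) (c := -c) (fun s hs => (ha s hs).neg)
    (fun s _ => le_of_eq (by ring)) hat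
  have hpos := add_mul_exp_sub_le_of_hasDerivAt ha (fun s _ => le_rfl) hat
  linarith

lemma toggle_equilibrium_iff {l₁ h₁ θ₁ l₂ h₂ θ₂ : ℝ} (hlθ₁ : l₁ < θ₁) (hθl₂ : θ₂ < l₂)
    (hlh₂ : l₂ < h₂) (x₁ x₂ : ℝ) :
    (x₁ = (if x₂ < θ₂ then h₁ else l₁) ∧ x₂ = (if x₁ < θ₁ then h₂ else l₂)) ↔
      (x₁ = l₁ ∧ x₂ = h₂) := by
  constructor
  · rintro ⟨h₁eq, h₂eq⟩
    have hx₂ : θ₂ < x₂ := by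
      rw [h₂eq]
      split_ifs <;> linarith
    rw [if_neg hx₂.le.not_gt] at h₁eq
    subst h₁eq
    exact ⟨rfl, by rwa [if_pos hlθ₁] at h₂eq⟩
  · rintro ⟨rfl, rfl⟩
    rw [if_neg (by linarith), if_pos hlθ₁]
    exact ⟨rfl, rfl⟩

theorem stmt_5_general (l₁ h₁ θ₁ l₂ h₂ θ₂ : ℝ)
    (hlθ₁ : l₁ < θ₁)
    (hθl₂ : θ₂ < l₂) (hlh₂ : l₂ < h₂) :
    (∀ x₁ x₂ : ℝ,
      (x₁ = (if x₂ < θ₂ then h₁ else l₁) ∧ x₂ = (if x₁ < θ₁ then h₂ else l₂)) ↔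
        (x₁ = l₁ ∧ x₂ = h₂)) ∧
    (∀ x₁ x₂ : ℝ → ℝ,
      (∀ t, 0 ≤ t → HasDerivAt x₁ (-x₁ t + (if x₂ t < θ₂ then h₁ else l₁)) t) →
      (∀ t, 0 ≤ t → HasDerivAt x₂ (-x₂ t + (if x₁ t < θ₁ then h₂ else l₂)) t) →
      Tendsto (fun t => (x₁ t, x₂ t)) atTop (nhds (l₁, h₂)) ∧
      ∃ T, 0 ≤ T ∧ ∀ t, T ≤ t → θ₂ < x₂ t) := by
  refine ⟨toggle_equilibrium_iff hlθ₁ hθl₂ hlh₂, fun x₁ x₂ hx₁ hx₂ => ?_⟩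
  have hx₂_above : ∀ᶠ t in atTop, θ₂ < x₂ t := by
    refine eventually_lt_of_hasDerivAt_ge_sub
      (f' := fun t => -x₂ t + if x₁ t < θ₁ then h₂ else l₂) ?_ hθl₂
    filter_upwards [eventually_ge_atTop 0] with t ht
    exact ⟨hx₂ t ht, by split_ifs <;> linarith⟩
  have hx₁_lim : Tendsto x₁ atTop (𝓝 l₁) := by
    refine tendsto_of_hasDerivAt_sub ?_
    filter_upwards [hx₂_above, eventually_ge_atTop 0] with t hθ ht
    simpa [not_lt.2 hθ.le, neg_add_eq_sub] using hx₁ t ht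
  have hx₂_lim : Tendsto x₂ atTop (𝓝 h₂) := by
    refine tendsto_of_hasDerivAt_sub ?_
    filter_upwards [hx₁_lim.eventually (eventually_lt_nhds hlθ₁), eventually_ge_atTop 0]
      with t hθ ht
    simpa [hθ, neg_add_eq_sub] using hx₂ t ht
  obtain ⟨T, hT⟩ := eventually_atTop.1 hx₂_above
  exact ⟨hx₁_lim.prodMk_nhds hx₂_lim, max T 0, le_max_right T 0,
    fun t ht => hT t ((le_max_left T 0).trans ht)⟩

/-- Toggle-switch switching system with `0 < l₁ < h₁`, `l₁ < θ₁` and `θ₂ < l₂ < h₂`: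
`(l₁, h₂)` is the unique equilibrium, every solution converges to `(l₁, h₂)`, and in
particular the repressor `x₂` is eventually permanently above its threshold `θ₂`. -/
theorem stmt_5 (l₁ h₁ θ₁ l₂ h₂ θ₂ : ℝ)
    (hpos₁ : 0 < l₁) (hlh₁ : l₁ < h₁) (hlθ₁ : l₁ < θ₁)
    (hθl₂ : θ₂ < l₂) (hlh₂ : l₂ < h₂) :
    (∀ x₁ x₂ : ℝ,
      (x₁ = (if x₂ < θ₂ then h₁ else l₁) ∧ x₂ = (if x₁ < θ₁ then h₂ else l₂)) ↔
        (x₁ = l₁ ∧ x₂ = h₂)) ∧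
    (∀ x₁ x₂ : ℝ → ℝ,
      (∀ t, 0 ≤ t → HasDerivAt x₁ (-x₁ t + (if x₂ t < θ₂ then h₁ else l₁)) t) →
      (∀ t, 0 ≤ t → HasDerivAt x₂ (-x₂ t + (if x₁ t < θ₁ then h₂ else l₂)) t) →
      Tendsto (fun t => (x₁ t, x₂ t)) atTop (nhds (l₁, h₂)) ∧
      ∃ T, 0 ≤ T ∧ ∀ t, T ≤ t → θ₂ < x₂ t) :=
  stmt_5_general l₁ h₁ θ₁ l₂ h₂ θ₂ hlθ₁ hθl₂ hlh₂
end

section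
/- Consider the three-node switching system with parameters satisfying the full-cycle (FC) DSGRN parameter inequalities: l_{XY}·l_{XZ} < h_{XY}·l_{XZ} < θ_{YX} < l_{XY}·h_{XZ} < h_{XY}·h_{XZ}; θ_{XY} < l_{YX} < θ_{ZY} < h_{YX}; and l_{ZY} < θ_{XZ} < h_{ZY}. Then the system has no equilibrium: there is no point (x, y, z) ∈ ℝ³ with x = a(y)·b(z), y = c(x), and z = d(y). -/
/-- At the full-cycle (FC) DSGRN parameter of the example three-node network
(`Y` activates `X`, `Z` represses `X`, `X` represses `Y`, `Y` represses `Z`),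
the switching system has no equilibrium. -/
theorem stmt_6 (lXY hXY lXZ hXZ lYX hYX lZY hZY θYX θXY θZY θXZ : ℝ)
    (hlXY : 0 < lXY) (hXY' : lXY < hXY)
    (hlXZ : 0 < lXZ) (hXZ' : lXZ < hXZ)
    (hlYX : 0 < lYX) (hYX' : lYX < hYX)
    (hlZY : 0 < lZY) (hZY' : lZY < hZY)
    (hθYX : 0 < θYX) (hθXY : 0 < θXY) (hθZY : 0 < θZY) (hθXZ : 0 < θXZ)
    -- FC parameter inequalities
    (hX1 : lXY * lXZ < hXY * lXZ) (hX2 : hXY * lXZ < θYX)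
    (hX3 : θYX < lXY * hXZ) (hX4 : lXY * hXZ < hXY * hXZ)
    (hY1 : θXY < lYX) (hY2 : lYX < θZY) (hY3 : θZY < hYX)
    (hZ1 : lZY < θXZ) (hZ2 : θXZ < hZY) :
    ¬ ∃ x y z : ℝ,
      x = (if θXY < y then hXY else lXY) * (if θXZ < z then lXZ else hXZ) ∧
      y = (if θYX < x then lYX else hYX) ∧
      z = (if θZY < y then lZY else hZY) := by
  rintro ⟨x, y, z, hx, hy, hz⟩
  by_cases hc : θYX < x
  · rw [if_pos hc] at hy
    subst hy
    rw [if_neg (by linarith)] at hz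
    subst hz
    rw [if_pos (by linarith), if_pos (by linarith)] at hx
    linarith
  · rw [if_neg hc] at hy
    subst hy
    rw [if_pos (by linarith)] at hz
    subst hz
    rw [if_pos (by linarith), if_neg (by linarith)] at hx
    linarith
end

section
/- Consider the three-node switching system with parameters satisfying the partial-cycle (PC) DSGRN parameter inequalities: l_{XY}·l_{XZ} < l_{XY}·h_{XZ} < θ_{YX} < h_{XY}·l_{XZ} < h_{XY}·h_{XZ}; l_{YX} < θ_{ZY} < θ_{XY} < h_{YX}; and l_{ZY} < h_{ZY} < θ_{XZ}. Then: (i) the system has no equilibrium, i.e., there is no point (x, y, z) with x = a(y)·b(z), y = c(x), z = d(y); and (ii) for every differentiable solution (x, y, z) : [0, ∞) → ℝ³ of the system there exists T ≥ 0 such that z(t) < θ_{XZ} for all t ≥ T (all recurrent dynamics lie in domains where Z is in its low state). -/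
/-!
(i) Along the negative loop X ⊣ Y → X the value of `x` decides `y`, which decides the factor
`a(y)` of `x`; whatever the factor `b(z)`, this forces `x` back to the other side of `θYX`,
so `x` cannot be a fixed point.

(ii) `z` relaxes towards `d(y) ≤ hZY < θXZ`: `(z t - hZY) * exp t` is antitone, hence
`z t ≤ hZY + (z 0 - hZY) * exp (-t)`, which is eventually below `θXZ`.
-/

open Real Set Filter

theorem false_of_negative_loop_fixedPoint {lXY hXY lXZ hXZ lYX hYX θYX θXY x y b : ℝ}
    (hlXY : 0 ≤ lXY) (hlh : lXY ≤ hXY) (hb : b ∈ Icc lXZ hXZ)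
    (hlow : lXY * hXZ < θYX) (hhigh : θYX < hXY * lXZ)
    (hYlow : lYX ≤ θXY) (hYhigh : θXY < hYX)
    (hx : x = (if θXY < y then hXY else lXY) * b) (hy : y = if θYX < x then lYX else hYX) :
    False := by
  by_cases hxθ : θYX < x
  · have hyθ : ¬θXY < y := by rw [hy, if_pos hxθ]; exact not_lt.mpr hYlow
    have : x ≤ lXY * hXZ := by
      rw [hx, if_neg hyθ]; exact mul_le_mul_of_nonneg_left hb.2 hlXY
    linarith
  · have hyθ : θXY < y := by rw [hy, if_neg hxθ]; exact hYhigh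
    have : hXY * lXZ ≤ x := by
      rw [hx, if_pos hyθ]; exact mul_le_mul_of_nonneg_left hb.1 (hlXY.trans hlh)
    linarith

theorem sub_le_mul_exp_neg_of_hasDerivAt_le {z z' : ℝ → ℝ} {M : ℝ}
    (hz : ∀ t, 0 ≤ t → HasDerivAt z (z' t) t) (hz' : ∀ t, 0 ≤ t → z' t ≤ -z t + M)
    {t : ℝ} (ht : 0 ≤ t) : z t - M ≤ (z 0 - M) * exp (-t) := by
  set u : ℝ → ℝ := fun t => (z t - M) * exp t
  have hu : ∀ t, 0 ≤ t → HasDerivAt u ((z' t + z t - M) * exp t) t := fun t ht =>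
    (((hz t ht).sub_const M).mul (hasDerivAt_exp t)).congr_deriv (by ring)
  have hanti : AntitoneOn u (Ici 0) := by
    apply antitoneOn_of_deriv_nonpos (convex_Ici 0)
    · exact fun t ht => (hu t ht).continuousAt.continuousWithinAt
    · rw [interior_Ici]
      exact fun t ht => (hu t (le_of_lt ht)).differentiableAt.differentiableWithinAt
    · rw [interior_Ici]
      intro t ht
      rw [(hu t ht.le).deriv]
      exact mul_nonpos_of_nonpos_of_nonneg (by linarith [hz' t ht.le]) (exp_pos t).le
  have : u t ≤ u 0 := hanti (mem_Ici.mpr le_rfl) ht ht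
  simp only [u, exp_zero, mul_one] at this
  calc z t - M = (z t - M) * exp t * exp (-t) := by rw [mul_assoc, ← exp_add]; simp
    _ ≤ (z 0 - M) * exp (-t) := mul_le_mul_of_nonneg_right this (exp_pos _).le

theorem exists_forall_ge_lt_of_hasDerivAt_le {z z' : ℝ → ℝ} {M θ : ℝ}
    (hz : ∀ t, 0 ≤ t → HasDerivAt z (z' t) t) (hz' : ∀ t, 0 ≤ t → z' t ≤ -z t + M)
    (hMθ : M < θ) : ∃ T, 0 ≤ T ∧ ∀ t, T ≤ t → z t < θ := by
  have hdecay : Tendsto (fun t => (z 0 - M) * exp (-t)) atTop (nhds 0) := by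
    simpa using tendsto_exp_neg_atTop_nhds_zero.const_mul (z 0 - M)
  obtain ⟨T, hT⟩ := eventually_atTop.mp
    ((hdecay.eventually (gt_mem_nhds (sub_pos.mpr hMθ))).and (eventually_ge_atTop 0))
  refine ⟨max T 0, le_max_right _ _, fun t ht => ?_⟩
  obtain ⟨hsmall, ht0⟩ := hT t (le_of_max_le_left ht)
  linarith [sub_le_mul_exp_neg_of_hasDerivAt_le hz hz' ht0]

theorem stmt_7_general (lXY hXY lXZ hXZ lYX hYX lZY hZY θYX θXY θZY θXZ : ℝ)
    (hlXY : 0 < lXY) (hXY' : lXY < hXY)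
    (hXZ' : lXZ < hXZ)
    -- PC parameter inequalities
    (hX2 : lXY * hXZ < θYX)
    (hX3 : θYX < hXY * lXZ)
    (hY1 : lYX < θZY) (hY2 : θZY < θXY) (hY3 : θXY < hYX)
    (hZ1 : lZY < hZY) (hZ2 : hZY < θXZ) :
    (¬ ∃ x y z : ℝ,
      x = (if θXY < y then hXY else lXY) * (if θXZ < z then lXZ else hXZ) ∧
      y = (if θYX < x then lYX else hYX) ∧
      z = (if θZY < y then lZY else hZY)) ∧
    (∀ x y z : ℝ → ℝ,
      (∀ t, 0 ≤ t → HasDerivAt x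
        (-x t + (if θXY < y t then hXY else lXY) * (if θXZ < z t then lXZ else hXZ)) t) →
      (∀ t, 0 ≤ t → HasDerivAt y (-y t + (if θYX < x t then lYX else hYX)) t) →
      (∀ t, 0 ≤ t → HasDerivAt z (-z t + (if θZY < y t then lZY else hZY)) t) →
      ∃ T, 0 ≤ T ∧ ∀ t, T ≤ t → z t < θXZ) := by
  constructor
  · rintro ⟨x, y, z, hx, hy, -⟩
    have hb : (if θXZ < z then lXZ else hXZ) ∈ Icc lXZ hXZ := by
      split_ifs <;> constructor <;> linarith
    exact false_of_negative_loop_fixedPoint hlXY.le hXY'.le hb hX2 hX3 (by linarith) hY3 hx hy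
  · intro x y z _ _ hz
    refine exists_forall_ge_lt_of_hasDerivAt_le hz (fun t _ => ?_) hZ2
    split_ifs <;> linarith

/-- At the partial-cycle (PC) DSGRN parameter of the example three-node network:
(i) the switching system has no equilibrium, and (ii) along every solution the
variable `Z` is eventually permanently below its threshold `θXZ`. -/
theorem stmt_7 (lXY hXY lXZ hXZ lYX hYX lZY hZY θYX θXY θZY θXZ : ℝ)
    (hlXY : 0 < lXY) (hXY' : lXY < hXY)
    (hlXZ : 0 < lXZ) (hXZ' : lXZ < hXZ)
    (hlYX : 0 < lYX) (hYX' : lYX < hYX)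
    (hlZY : 0 < lZY) (hZY' : lZY < hZY)
    (hθYX : 0 < θYX) (hθXY : 0 < θXY) (hθZY : 0 < θZY) (hθXZ : 0 < θXZ)
    -- PC parameter inequalities
    (hX1 : lXY * lXZ < lXY * hXZ) (hX2 : lXY * hXZ < θYX)
    (hX3 : θYX < hXY * lXZ) (hX4 : hXY * lXZ < hXY * hXZ)
    (hY1 : lYX < θZY) (hY2 : θZY < θXY) (hY3 : θXY < hYX)
    (hZ1 : lZY < hZY) (hZ2 : hZY < θXZ) :
    (¬ ∃ x y z : ℝ,
      x = (if θXY < y then hXY else lXY) * (if θXZ < z then lXZ else hXZ) ∧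
      y = (if θYX < x then lYX else hYX) ∧
      z = (if θZY < y then lZY else hZY)) ∧
    (∀ x y z : ℝ → ℝ,
      (∀ t, 0 ≤ t → HasDerivAt x
        (-x t + (if θXY < y t then hXY else lXY) * (if θXZ < z t then lXZ else hXZ)) t) →
      (∀ t, 0 ≤ t → HasDerivAt y (-y t + (if θYX < x t then lYX else hYX)) t) →
      (∀ t, 0 ≤ t → HasDerivAt z (-z t + (if θZY < y t then lZY else hZY)) t) →
      ∃ T, 0 ≤ T ∧ ∀ t, T ≤ t → z t < θXZ) :=
  stmt_7_general lXY hXY lXZ hXZ lYX hYX lZY hZY θYX θXY θZY θXZ hlXY hXY' hXZ' hX2 hX3 hY1 hY2 hY3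
    hZ1 hZ2
end

section
/- Consider the three-node switching system with parameters satisfying the fixed-point (FP) DSGRN parameter inequalities: l_{XY}·l_{XZ} < θ_{YX}, θ_{YX} < h_{XY}·l_{XZ}, θ_{YX} < l_{XY}·h_{XZ}; l_{YX} < θ_{ZY} < θ_{XY} < h_{YX}; and l_{ZY} < h_{ZY} < θ_{XZ}. Then: (i) the point (l_{XY}·h_{XZ}, l_{YX}, h_{ZY}) is the unique equilibrium of the system, and it lies in the domain D = {(x, y, z) : x > θ_{YX}, y < θ_{ZY}, z < θ_{XZ}} (the domain labeled (100)); and (ii) every differentiable solution of the system with initial condition in D remains in D for all t ≥ 0 and converges to (l_{XY}·h_{XZ}, l_{YX}, h_{ZY}) as t → ∞. -/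
open Filter

lemma lin_ode' (u : ℝ → ℝ) (c T : ℝ)
    (h : ∀ t ∈ Set.Icc (0:ℝ) T, HasDerivAt u (-u t + c) t) :
    ∀ t ∈ Set.Icc (0:ℝ) T, u t = c + (u 0 - c) * Real.exp (-t) := by
  have key : ∀ t ∈ Set.Icc (0:ℝ) T,
      (fun s => Real.exp s * (u s - c)) t = (fun s => Real.exp s * (u s - c)) 0 := by
    apply constant_of_has_deriv_right_zero
    · intro s hs
      exact ((Real.continuous_exp.continuousAt.mul
        (((h s hs).continuousAt).sub continuousAt_const))).continuousWithinAt
    · intro s hs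
      have hd : HasDerivAt (fun s => Real.exp s * (u s - c))
          (Real.exp s * (u s - c) + Real.exp s * (-u s + c)) s :=
        (Real.hasDerivAt_exp s).mul (((h s (Set.Ico_subset_Icc_self hs)).sub_const c))
      have : Real.exp s * (u s - c) + Real.exp s * (-u s + c) = 0 := by ring
      rw [this] at hd
      exact hd.hasDerivWithinAt
  intro t ht
  have hk := key t ht
  simp only [Real.exp_zero, one_mul] at hk
  have hpos := Real.exp_pos t
  have h2 : u t - c = (u 0 - c) * Real.exp (-t) := by
    rw [Real.exp_neg]
    field_simp
    linarith [hk]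
  linarith

lemma bound_min' (a c e : ℝ) (he1 : 0 < e) (he2 : e ≤ 1) : min a c ≤ c + (a - c) * e := by
  rcases le_total a c with h | h
  · have := min_le_left a c; nlinarith
  · have := min_le_right a c; nlinarith

lemma bound_max' (a c e : ℝ) (he1 : 0 < e) (he2 : e ≤ 1) : c + (a - c) * e ≤ max a c := by
  rcases le_total a c with h | h
  · have := le_max_right a c; nlinarith
  · have := le_max_left a c; nlinarith

/-- At the fixed-point (FP) DSGRN parameter of the example three-node network:
(i) `(lXY·hXZ, lYX, hZY)` is the unique equilibrium and lies in the domain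
`D = {x > θYX, y < θZY, z < θXZ}` (labeled `(100)`); and (ii) every solution starting
in `D` stays in `D` for all `t ≥ 0` and converges to this equilibrium. -/
theorem stmt_8 (lXY hXY lXZ hXZ lYX hYX lZY hZY θYX θXY θZY θXZ : ℝ)
    (hlXY : 0 < lXY) (hXY' : lXY < hXY)
    (hlXZ : 0 < lXZ) (hXZ' : lXZ < hXZ)
    (hlYX : 0 < lYX) (hYX' : lYX < hYX)
    (hlZY : 0 < lZY) (hZY' : lZY < hZY)
    (hθYX : 0 < θYX) (hθXY : 0 < θXY) (hθZY : 0 < θZY) (hθXZ : 0 < θXZ)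
    -- FP parameter inequalities
    (hX1 : lXY * lXZ < θYX) (hX2 : θYX < hXY * lXZ) (hX3 : θYX < lXY * hXZ)
    (hY1 : lYX < θZY) (hY2 : θZY < θXY) (hY3 : θXY < hYX)
    (hZ1 : lZY < hZY) (hZ2 : hZY < θXZ) :
    ((∀ x y z : ℝ,
      (x = (if θXY < y then hXY else lXY) * (if θXZ < z then lXZ else hXZ) ∧
       y = (if θYX < x then lYX else hYX) ∧
       z = (if θZY < y then lZY else hZY)) ↔
      (x = lXY * hXZ ∧ y = lYX ∧ z = hZY)) ∧
      θYX < lXY * hXZ ∧ lYX < θZY ∧ hZY < θXZ) ∧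
    (∀ x y z : ℝ → ℝ,
      (∀ t, 0 ≤ t → HasDerivAt x
        (-x t + (if θXY < y t then hXY else lXY) * (if θXZ < z t then lXZ else hXZ)) t) →
      (∀ t, 0 ≤ t → HasDerivAt y (-y t + (if θYX < x t then lYX else hYX)) t) →
      (∀ t, 0 ≤ t → HasDerivAt z (-z t + (if θZY < y t then lZY else hZY)) t) →
      θYX < x 0 → y 0 < θZY → z 0 < θXZ →
      (∀ t, 0 ≤ t → θYX < x t ∧ y t < θZY ∧ z t < θXZ) ∧
      Tendsto (fun t => (x t, y t, z t)) atTop (nhds (lXY * hXZ, lYX, hZY))) := by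
  constructor
  · refine ⟨?_, hX3, hY1, hZ2⟩
    intro x y z
    constructor
    · rintro ⟨he1, he2, he3⟩
      rcases lt_or_ge θYX x with hx | hx
      · rw [if_pos hx] at he2
        subst he2
        rw [if_neg (by linarith)] at he3
        subst he3
        rw [if_neg (by linarith), if_neg (by linarith)] at he1
        exact ⟨he1, rfl, rfl⟩
      · rw [if_neg (not_lt.2 hx)] at he2
        subst he2
        rw [if_pos (by linarith)] at he3
        subst he3
        rw [if_pos (by linarith), if_neg (by linarith)] at he1
        exfalso
        nlinarith
    · rintro ⟨rfl, rfl, rfl⟩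
      refine ⟨?_, ?_, ?_⟩
      · rw [if_neg (by linarith), if_neg (by linarith)]
      · rw [if_pos hX3]
      · rw [if_neg (by linarith)]
  · intro x y z hx hy hz hx0 hy0 hz0
    set c₁ := lXY * hXZ with hc₁
    have hmx : θYX < min (x 0) c₁ := lt_min hx0 hX3
    have hMy : max (y 0) lYX < θZY := max_lt hy0 hY1
    have hMz : max (z 0) hZY < θXZ := max_lt hz0 hZ2
    set Q : ℝ → Prop := fun t => min (x 0) c₁ ≤ x t ∧ y t ≤ max (y 0) lYX ∧ z t ≤ max (z 0) hZY
      with hQdef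
    have Pof : ∀ t, Q t → θYX < x t ∧ y t < θZY ∧ z t < θXZ := by
      rintro t ⟨h1, h2, h3⟩
      exact ⟨lt_of_lt_of_le hmx h1, lt_of_le_of_lt h2 hMy, lt_of_le_of_lt h3 hMz⟩
    -- derivative rewriting under the strict conditions
    have derivx : ∀ s, 0 ≤ s → (θYX < x s ∧ y s < θZY ∧ z s < θXZ) →
        HasDerivAt x (-x s + c₁) s := by
      intro s hs hp
      have h := hx s hs
      rwa [if_neg (by push_neg; linarith [hp.2.1]), if_neg (by push_neg; linarith [hp.2.2])] at h
    have derivy : ∀ s, 0 ≤ s → (θYX < x s ∧ y s < θZY ∧ z s < θXZ) →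
        HasDerivAt y (-y s + lYX) s := by
      intro s hs hp
      have h := hy s hs
      rwa [if_pos hp.1] at h
    have derivz : ∀ s, 0 ≤ s → (θYX < x s ∧ y s < θZY ∧ z s < θXZ) →
        HasDerivAt z (-z s + hZY) s := by
      intro s hs hp
      have h := hz s hs
      rwa [if_neg (by push_neg; linarith [hp.2.1])] at h
    -- bounds from the explicit formula
    have boundx : ∀ s : ℝ, 0 ≤ s → x s = c₁ + (x 0 - c₁) * Real.exp (-s) →
        min (x 0) c₁ ≤ x s := by
      intro s hs hf
      rw [hf]
      exact bound_min' _ _ _ (Real.exp_pos _) (Real.exp_le_one_iff.2 (by linarith))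
    have boundy : ∀ s : ℝ, 0 ≤ s → y s = lYX + (y 0 - lYX) * Real.exp (-s) →
        y s ≤ max (y 0) lYX := by
      intro s hs hf
      rw [hf]
      exact bound_max' _ _ _ (Real.exp_pos _) (Real.exp_le_one_iff.2 (by linarith))
    have boundz : ∀ s : ℝ, 0 ≤ s → z s = hZY + (z 0 - hZY) * Real.exp (-s) →
        z s ≤ max (z 0) hZY := by
      intro s hs hf
      rw [hf]
      exact bound_max' _ _ _ (Real.exp_pos _) (Real.exp_le_one_iff.2 (by linarith))
    -- step: right-openness
    have step : ∀ t, 0 ≤ t → (∀ s, 0 ≤ s → s ≤ t → Q s) →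
        ∃ ε > 0, ∀ s, 0 ≤ s → s < t + ε → Q s := by
      intro t ht hQ
      have hPt := Pof t (hQ t ht le_rfl)
      have h1 : ∀ᶠ s in nhds t, θYX < x s :=
        (hx t ht).continuousAt.eventually_const_lt hPt.1
      have h2 : ∀ᶠ s in nhds t, y s < θZY :=
        (hy t ht).continuousAt.eventually_lt_const hPt.2.1
      have h3 : ∀ᶠ s in nhds t, z s < θXZ :=
        (hz t ht).continuousAt.eventually_lt_const hPt.2.2
      obtain ⟨ε, hε, hball⟩ := Metric.eventually_nhds_iff.1 (h1.and (h2.and h3))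
      have hP' : ∀ s, 0 ≤ s → s < t + ε → θYX < x s ∧ y s < θZY ∧ z s < θXZ := by
        intro s hs0 hsl
        rcases le_or_gt s t with h | h
        · exact Pof s (hQ s hs0 h)
        · refine hball ?_
          rw [Real.dist_eq, abs_lt]
          constructor <;> linarith
      refine ⟨ε, hε, ?_⟩
      intro s hs0 hs
      have hfx := lin_ode' x c₁ s
        (fun r hr => derivx r hr.1 (hP' r hr.1 (lt_of_le_of_lt hr.2 hs))) s ⟨hs0, le_rfl⟩
      have hfy := lin_ode' y lYX s
        (fun r hr => derivy r hr.1 (hP' r hr.1 (lt_of_le_of_lt hr.2 hs))) s ⟨hs0, le_rfl⟩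
      have hfz := lin_ode' z hZY s
        (fun r hr => derivz r hr.1 (hP' r hr.1 (lt_of_le_of_lt hr.2 hs))) s ⟨hs0, le_rfl⟩
      exact ⟨boundx s hs0 hfx, boundy s hs0 hfy, boundz s hs0 hfz⟩
    -- main invariance
    have allQ : ∀ t, 0 ≤ t → Q t := by
      by_contra hcon
      push_neg at hcon
      obtain ⟨t0, ht0, hQt0⟩ := hcon
      set B := {t : ℝ | 0 ≤ t ∧ ¬ Q t} with hBdef
      have hBne : B.Nonempty := ⟨t0, ht0, hQt0⟩
      have hBbdd : BddBelow B := ⟨0, fun b hb => hb.1⟩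
      set u := sInf B with hu
      have hu0 : 0 ≤ u := le_csInf hBne (fun b hb => hb.1)
      have hQlt : ∀ s, 0 ≤ s → s < u → Q s := by
        intro s hs0 hsu
        by_contra h
        exact absurd (csInf_le hBbdd ⟨hs0, h⟩) (not_le.2 hsu)
      have hQ0 : Q 0 := ⟨min_le_left _ _, le_max_left _ _, le_max_left _ _⟩
      have hQu : Q u := by
        rcases eq_or_lt_of_le hu0 with h | h
        · rw [← h]; exact hQ0
        · have hev : ∀ᶠ s in nhdsWithin u (Set.Iio u), 0 < s ∧ s < u := by
            have h1 : ∀ᶠ s in nhdsWithin u (Set.Iio u), 0 < s :=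
              eventually_nhdsWithin_of_eventually_nhds (eventually_gt_nhds h)
            have h2 : ∀ᶠ s in nhdsWithin u (Set.Iio u), s < u :=
              eventually_mem_nhdsWithin.mono (fun s hs => hs)
            exact h1.and h2
          have htx : Tendsto x (nhdsWithin u (Set.Iio u)) (nhds (x u)) :=
            (hx u hu0).continuousAt.continuousWithinAt
          have hty : Tendsto y (nhdsWithin u (Set.Iio u)) (nhds (y u)) :=
            (hy u hu0).continuousAt.continuousWithinAt
          have htz : Tendsto z (nhdsWithin u (Set.Iio u)) (nhds (z u)) :=
            (hz u hu0).continuousAt.continuousWithinAt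
          refine ⟨ge_of_tendsto htx ?_, le_of_tendsto hty ?_, le_of_tendsto htz ?_⟩
          · exact hev.mono (fun s hs => (hQlt s hs.1.le hs.2).1)
          · exact hev.mono (fun s hs => (hQlt s hs.1.le hs.2).2.1)
          · exact hev.mono (fun s hs => (hQlt s hs.1.le hs.2).2.2)
      have hQle : ∀ s, 0 ≤ s → s ≤ u → Q s := by
        intro s h1 h2
        rcases h2.lt_or_eq with h | h
        · exact hQlt s h1 h
        · rw [h]; exact hQu
      obtain ⟨ε, hε, hQε⟩ := step u hu0 hQle
      obtain ⟨b, hbB, hbu⟩ := Real.lt_sInf_add_pos hBne hε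
      exact hbB.2 (hQε b hbB.1 hbu)
    have allP : ∀ t, 0 ≤ t → θYX < x t ∧ y t < θZY ∧ z t < θXZ :=
      fun t ht => Pof t (allQ t ht)
    refine ⟨allP, ?_⟩
    -- explicit formulas for all t ≥ 0
    have fx : ∀ t, 0 ≤ t → x t = c₁ + (x 0 - c₁) * Real.exp (-t) := by
      intro t ht
      exact lin_ode' x c₁ t (fun r hr => derivx r hr.1 (allP r hr.1)) t ⟨ht, le_rfl⟩
    have fy : ∀ t, 0 ≤ t → y t = lYX + (y 0 - lYX) * Real.exp (-t) := by
      intro t ht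
      exact lin_ode' y lYX t (fun r hr => derivy r hr.1 (allP r hr.1)) t ⟨ht, le_rfl⟩
    have fz : ∀ t, 0 ≤ t → z t = hZY + (z 0 - hZY) * Real.exp (-t) := by
      intro t ht
      exact lin_ode' z hZY t (fun r hr => derivz r hr.1 (allP r hr.1)) t ⟨ht, le_rfl⟩
    have hexp : Tendsto (fun t : ℝ => Real.exp (-t)) atTop (nhds 0) := by
      have := Real.tendsto_exp_atBot
      exact this.comp tendsto_neg_atTop_atBot
    have tlim : ∀ (u : ℝ → ℝ) (c : ℝ), (∀ t, 0 ≤ t → u t = c + (u 0 - c) * Real.exp (-t)) →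
        Tendsto u atTop (nhds c) := by
      intro u c hf
      have h1 : Tendsto (fun t : ℝ => c + (u 0 - c) * Real.exp (-t)) atTop (nhds c) := by
        have := (tendsto_const_nhds (x := c) (f := atTop (α := ℝ))).add
          ((tendsto_const_nhds (x := u 0 - c) (f := atTop (α := ℝ))).mul hexp)
        simpa using this
      refine h1.congr' ?_
      filter_upwards [eventually_ge_atTop (0:ℝ)] with t ht
      exact (hf t ht).symm
    have tx := tlim x c₁ fx
    have ty := tlim y lYX fy
    have tz := tlim z hZY fz
    exact tx.prodMk_nhds (ty.prodMk_nhds tz)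
end

section
/- Let G be the directed graph on the 12 vertices V = {000, 001, 010, 011, 020, 021, 100, 101, 110, 111, 120, 121} with edge set E = {101→001, 000→001, 000→100, 100→101, 010→011, 010→110, 001→011, 000→010, 100→110, 110→111, 111→011, 101→111, 121→021, 121→120, 021→020, 020→120, 011→021, 121→111, 120→110, 010→020}. Let R = {110, 111, 011, 021, 020, 120}. Then: (i) the edges of G with source in R are exactly the six edges of the cycle 110→111→011→021→020→120→110, so R induces a directed 6-cycle and no edge leaves R; (ii) every vertex of V has a directed path in G to a vertex of R; and (iii) every directed cycle of G is contained in R. Hence R is the unique recurrent component (stable full cycle) of this state transition graph. -/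
/-- Vertices of the state transition graph of the example three-node network:
a state records the discretized levels of `X ∈ {0,1}`, `Y ∈ {0,1,2}`, `Z ∈ {0,1}`. -/
abbrev STGVertex : Type := Fin 2 × Fin 3 × Fin 2

/-- The state `XYZ`. -/
def st (a : Fin 2) (b : Fin 3) (c : Fin 2) : STGVertex := (a, b, c)

/-- Edges of the STG of the three-node network at the full-cycle (FC) DSGRN parameter. -/
def EdgeFC : STGVertex → STGVertex → Prop := fun u w => (u, w) ∈
  ({(st 1 0 1, st 0 0 1), (st 0 0 0, st 0 0 1), (st 0 0 0, st 1 0 0),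
    (st 1 0 0, st 1 0 1), (st 0 1 0, st 0 1 1), (st 0 1 0, st 1 1 0),
    (st 0 0 1, st 0 1 1), (st 0 0 0, st 0 1 0), (st 1 0 0, st 1 1 0),
    (st 1 1 0, st 1 1 1), (st 1 1 1, st 0 1 1), (st 1 0 1, st 1 1 1),
    (st 1 2 1, st 0 2 1), (st 1 2 1, st 1 2 0), (st 0 2 1, st 0 2 0),
    (st 0 2 0, st 1 2 0), (st 0 1 1, st 0 2 1), (st 1 2 1, st 1 1 1),
    (st 1 2 0, st 1 1 0), (st 0 1 0, st 0 2 0)} : Set (STGVertex × STGVertex))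

/-- The recurrent set `R = {110, 111, 011, 021, 020, 120}`. -/
def RFC : Set STGVertex :=
  {st 1 1 0, st 1 1 1, st 0 1 1, st 0 2 1, st 0 2 0, st 1 2 0}

/-- The six edges of the cycle `110→111→011→021→020→120→110`. -/
def CycFC : Set (STGVertex × STGVertex) :=
  {(st 1 1 0, st 1 1 1), (st 1 1 1, st 0 1 1), (st 0 1 1, st 0 2 1),
   (st 0 2 1, st 0 2 0), (st 0 2 0, st 1 2 0), (st 1 2 0, st 1 1 0)}

instance instDecRFC : DecidablePred (· ∈ RFC) := fun u => by
  unfold RFC st; infer_instance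

set_option synthInstance.maxSize 4096 in
set_option synthInstance.maxHeartbeats 1000000 in
instance instDecEdge (u w : STGVertex) : Decidable (EdgeFC u w) := by
  unfold EdgeFC st; infer_instance

set_option synthInstance.maxSize 4096 in
set_option synthInstance.maxHeartbeats 1000000 in
instance instDecCyc : DecidablePred (· ∈ CycFC) := fun p => by
  unfold CycFC st; infer_instance

/-- A potential function decreasing along edges outside `RFC`. -/
def fFC : STGVertex → ℕ := fun u =>
  if u = st 0 0 0 then 4 else if u = st 1 0 0 then 3 else
  if u = st 1 0 1 then 2 else if u ∈ RFC then 0 else 1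

lemma edge_closed : ∀ u w : STGVertex, EdgeFC u w → u ∈ RFC → w ∈ RFC := by decide

lemma edge_decr : ∀ u w : STGVertex, EdgeFC u w → w ∈ RFC ∨ fFC w < fFC u := by decide

lemma rtg_prop {w v : STGVertex} (h : Relation.ReflTransGen EdgeFC w v) :
    (w ∈ RFC → v ∈ RFC) ∧ (v ∈ RFC ∨ fFC v ≤ fFC w) := by
  induction h with
  | refl => exact ⟨id, Or.inr le_rfl⟩
  | tail _ e ih =>
    rename_i b c
    refine ⟨fun hw => edge_closed _ _ e (ih.1 hw), ?_⟩
    rcases edge_decr _ _ e with hc | hlt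
    · exact Or.inl hc
    · rcases ih.2 with hb | hle
      · exact Or.inl (edge_closed _ _ e hb)
      · exact Or.inr (le_trans hlt.le hle)

/-- At the FC parameter: (i) the edges with source in `R` are exactly the six cycle
edges, so `R` induces a directed 6-cycle and no edge leaves `R`; (ii) every vertex has
a directed path to `R`; (iii) every directed cycle is contained in `R`.  Hence `R` is
the unique recurrent component (stable full cycle) of this STG. -/
theorem stmt_9 :
    (∀ u ∈ RFC, ∀ w, EdgeFC u w ↔ (u, w) ∈ CycFC) ∧
    (∀ u : STGVertex, ∃ r ∈ RFC, Relation.ReflTransGen EdgeFC u r) ∧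
    (∀ u : STGVertex, Relation.TransGen EdgeFC u u → u ∈ RFC) := by
  refine ⟨by decide, ?_, ?_⟩
  · intro u
    obtain ⟨a, b, c⟩ := u
    fin_cases a <;> fin_cases b <;> fin_cases c
    · -- 000 → 010 → 110
      exact ⟨st 1 1 0, by decide,
        .head (by decide : EdgeFC (st 0 0 0) (st 0 1 0))
          (.single (by decide : EdgeFC (st 0 1 0) (st 1 1 0)))⟩
    · -- 001 → 011
      exact ⟨st 0 1 1, by decide, .single (by decide : EdgeFC (st 0 0 1) (st 0 1 1))⟩
    · -- 010 → 110
      exact ⟨st 1 1 0, by decide, .single (by decide : EdgeFC (st 0 1 0) (st 1 1 0))⟩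
    · exact ⟨st 0 1 1, by decide, .refl⟩
    · exact ⟨st 0 2 0, by decide, .refl⟩
    · exact ⟨st 0 2 1, by decide, .refl⟩
    · -- 100 → 110
      exact ⟨st 1 1 0, by decide, .single (by decide : EdgeFC (st 1 0 0) (st 1 1 0))⟩
    · -- 101 → 111
      exact ⟨st 1 1 1, by decide, .single (by decide : EdgeFC (st 1 0 1) (st 1 1 1))⟩
    · exact ⟨st 1 1 0, by decide, .refl⟩
    · exact ⟨st 1 1 1, by decide, .refl⟩
    · exact ⟨st 1 2 0, by decide, .refl⟩
    · -- 121 → 111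
      exact ⟨st 1 1 1, by decide, .single (by decide : EdgeFC (st 1 2 1) (st 1 1 1))⟩
  · intro u h
    by_contra hu
    obtain ⟨w, e, hwu⟩ := (Relation.TransGen.head'_iff).1 h
    rcases edge_decr _ _ e with hw | hlt
    · exact hu ((rtg_prop hwu).1 hw)
    · rcases (rtg_prop hwu).2 with h1 | h2
      · exact hu h1
      · exact absurd (lt_of_le_of_lt h2 hlt) (lt_irrefl _)
end

section
/- Let c < d be real numbers, let ε > 0, and let f, g : ℝ → ℝ be continuous on [c, d] with |f(t) − g(t)| ≤ ε for all t ∈ [c, d]. Let m = min of f on [c, d], and suppose f(c) > m + 2ε and f(d) > m + 2ε. Then g attains its minimum over [c, d] at some point t₀ in the open interval (c, d); in particular, g has a local minimum in (c, d). (This is the guarantee underlying extremal intervals in time-series discretization: any perturbation of the data bounded within the ±ε envelope around its graph is guaranteed to have a minimum located within the extremal interval.) -/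
/-- Extremal-interval guarantee for time-series discretization: if `f` and `g` are
continuous on `[c, d]`, `|f − g| ≤ ε` there, `m` is the (attained) minimum of `f` on
`[c, d]`, and `f(c), f(d) > m + 2ε`, then `g` attains its minimum over `[c, d]` at
some interior point `t₀ ∈ (c, d)`; in particular `g` has a local minimum in `(c, d)`. -/
theorem stmt_18 (c d ε m : ℝ) (hcd : c < d) (hε : 0 < ε) (f g : ℝ → ℝ)
    (hf : ContinuousOn f (Set.Icc c d)) (hg : ContinuousOn g (Set.Icc c d))
    (hfg : ∀ t ∈ Set.Icc c d, |f t - g t| ≤ ε)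
    (hm : IsLeast (f '' Set.Icc c d) m)
    (hc : m + 2 * ε < f c) (hd : m + 2 * ε < f d) :
    ∃ t₀ ∈ Set.Ioo c d, ∀ t ∈ Set.Icc c d, g t₀ ≤ g t := by
  obtain ⟨t₀, ht₀, hmin⟩ := (isCompact_Icc).exists_isMinOn (Set.nonempty_Icc.2 hcd.le) hg
  obtain ⟨⟨s, hs, hfs⟩, -⟩ := hm
  have hcm : c ∈ Set.Icc c d := Set.left_mem_Icc.2 hcd.le
  have hdm : d ∈ Set.Icc c d := Set.right_mem_Icc.2 hcd.le
  have hgs : g s ≤ m + ε := by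
    have := abs_le.1 (hfg s hs)
    linarith [this.1]
  have hgt₀ : g t₀ ≤ m + ε := le_trans (hmin hs) hgs
  refine ⟨t₀, ⟨?_, ?_⟩, fun t ht => hmin ht⟩
  · rcases eq_or_lt_of_le ht₀.1 with h | h
    · exfalso
      have h1 := abs_le.1 (hfg c hcm)
      have : g c ≤ m + ε := h ▸ hgt₀
      linarith [h1.2]
    · exact h
  · rcases eq_or_lt_of_le ht₀.2 with h | h
    · exfalso
      have h1 := abs_le.1 (hfg d hdm)
      have : g d ≤ m + ε := h ▸ hgt₀
      linarith [h1.2]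
    · exact h
end
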